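/- arXiv:1705.05006 — 2 statements merged into one kernel-verified Lean document; each statement's English description precedes it below -/
import Mathlib

section
/- For every probability mass function p on ℕ and every integer n ≥ 2, E[Φ_1(X^n)·(Φ_1(X^n) − 1)] = n(n−1)·∑_{u,v∈ℕ, u≠v} p(u)p(v)(1−p(u)−p(v))^{n−2}, where the sum is over ordered pairs of distinct symbols. -/
open scoped BigOperators

noncomputable section

/-- `p` is a probability mass function on `ℕ`. -/
def IsPMF (p : ℕ → ℝ) : Prop := (∀ u, 0 ≤ p u) ∧ HasSum p 1

/-- `N_u(X^n)`: the number of appearances of the symbol `u` in the sample `x`. -/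
def nOcc {n : ℕ} (x : Fin n → ℕ) (u : ℕ) : ℕ :=
  (Finset.univ.filter fun i => x i = u).card

/-- Probability of the sample `x` under the `n`-fold product measure `p^⊗n`. -/
def sampleProb {n : ℕ} (p : ℕ → ℝ) (x : Fin n → ℕ) : ℝ := ∏ i, p (x i)

/-- Expectation of `f(X^n)` for `X^n ∼ p^⊗n`. -/
def expct (n : ℕ) (p : ℕ → ℝ) (f : (Fin n → ℕ) → ℝ) : ℝ :=
  ∑' x : Fin n → ℕ, sampleProb p x * f x

/-- The missing mass `M₀(X^n) = ∑_u p(u) 𝟙[N_u(X^n) = 0]`. -/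
def missingMass {n : ℕ} (p : ℕ → ℝ) (x : Fin n → ℕ) : ℝ :=
  ∑' u : ℕ, if nOcc x u = 0 then p u else 0

/-- `Φ_i(X^n)`: the number of symbols appearing exactly `i` times in `x` (for `i ≥ 1`). -/
def phi {n : ℕ} (i : ℕ) (x : Fin n → ℕ) : ℕ :=
  ((Finset.univ.image x).filter fun u => nOcc x u = i).card

/-- The Good-Turing estimator `M^GT(X^n) = Φ₁(X^n)/n`. -/
def goodTuring {n : ℕ} (x : Fin n → ℕ) : ℝ := (phi 1 x : ℝ) / n

/-- The squared-error risk `R_n(M̂, p) = E[(M̂(X^n) - M₀(X^n))²]`. -/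
def risk (n : ℕ) (p : ℕ → ℝ) (M : (Fin n → ℕ) → ℝ) : ℝ :=
  expct n p fun x => (M x - missingMass p x) ^ 2

/-- The worst-case risk of the Good-Turing estimator, `sup_p R_n(M^GT, p)`. -/
def gtWorstRisk (n : ℕ) : ℝ :=
  sSup {r : ℝ | ∃ p : ℕ → ℝ, IsPMF p ∧ r = risk n p goodTuring}

/-! `Φ₁(Φ₁ - 1)` counts the ordered pairs of distinct symbols that are each seen exactly once.
For fixed `u ≠ v`, the event `N_u = N_v = 1` is the disjoint union, over ordered pairs of
positions `i ≠ j`, of the product events `{X_i = u, X_j = v, X_k ∉ {u, v} otherwise}`, each of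
probability `p(u) p(v) (1 - p(u) - p(v))^(n-2)`. Exchanging the expectation with the sum over
pairs of symbols (Tonelli, everything being nonnegative) gives the formula. -/

open Finset

section

theorem hasSum_pi_prod_of_nonneg {β : Type*} {n : ℕ} {f : Fin n → β → ℝ} {a : Fin n → ℝ}
    (hf : ∀ i b, 0 ≤ f i b) (ha : ∀ i, HasSum (f i) (a i)) :
    HasSum (fun x : Fin n → β => ∏ i, f i (x i)) (∏ i, a i) := by
  induction n with
  | zero => simp
  | succ n ih =>
    have htail := ih (fun i b => hf i.succ b) fun i => ha i.succ
    have hf0 : 0 ≤ f 0 := hf 0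
    have htail0 : 0 ≤ fun y : Fin n → β => ∏ i, f i.succ (y i) :=
      fun y => prod_nonneg fun i _ => hf i.succ (y i)
    have hmul := Summable.mul_of_nonneg (ha 0).summable htail.summable hf0 htail0
    have hsum := (ha 0).mul htail hmul
    rw [Fin.prod_univ_succ]
    refine (Fin.consEquiv fun _ => β).hasSum_iff.mp ?_
    simpa [Function.comp_def, Fin.prod_univ_succ, Fin.consEquiv] using hsum

variable {p : ℕ → ℝ} {n : ℕ}

theorem sampleProb_nonneg (hp : ∀ u, 0 ≤ p u) (x : Fin n → ℕ) : 0 ≤ sampleProb p x :=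
  prod_nonneg fun i _ => hp (x i)

theorem hasSum_sampleProb (hp : IsPMF p) : HasSum (sampleProb (n := n) p) 1 := by
  have h := hasSum_pi_prod_of_nonneg (fun _ => hp.1) fun _ : Fin n => hp.2
  rwa [prod_const_one] at h

theorem hasSum_expct (hp : IsPMF p) {f : (Fin n → ℕ) → ℝ} {C : ℝ} (hf : ∀ x, 0 ≤ f x)
    (hfC : ∀ x, f x ≤ C) : HasSum (fun x => sampleProb p x * f x) (expct n p f) := by
  refine Summable.hasSum (.of_nonneg_of_le (fun x => mul_nonneg (sampleProb_nonneg hp.1 x) (hf x))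
    (fun x => ?_) ((hasSum_sampleProb hp).summable.mul_right C))
  exact mul_le_mul_of_nonneg_left (hfC x) (sampleProb_nonneg hp.1 x)

theorem hasSum_sampleProb_mul_prod_indicator (hp : ∀ u, 0 ≤ p u) {S : Fin n → Set ℕ}
    {a : Fin n → ℝ} (ha : ∀ i, HasSum ((S i).indicator p) (a i)) :
    HasSum (fun x => sampleProb p x * ∏ i, (S i).indicator 1 (x i)) (∏ i, a i) := by
  have hind : ∀ i b, 0 ≤ (S i).indicator p b := fun i b => Set.indicator_nonneg (fun b _ => hp b) b
  convert hasSum_pi_prod_of_nonneg hind ha using 2 with x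
  rw [sampleProb, ← prod_mul_distrib]
  refine prod_congr rfl fun i _ => ?_
  by_cases hx : x i ∈ S i <;> simp [hx]

theorem nOcc_eq_one_iff {x : Fin n → ℕ} {u : ℕ} : nOcc x u = 1 ↔ ∃ i, ∀ k, x k = u ↔ k = i := by
  simp [nOcc, card_eq_one, Finset.ext_iff]

theorem ite_nOcc_eq_one (x : Fin n → ℕ) (u : ℕ) :
    (if nOcc x u = 1 then 1 else 0 : ℝ) = ∑ i, if ∀ k, x k = u ↔ k = i then 1 else 0 := by
  by_cases h : nOcc x u = 1
  · obtain ⟨i, hi⟩ := nOcc_eq_one_iff.mp h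
    have honly : ∀ j, (∀ k, x k = u ↔ k = j) ↔ j = i := fun j =>
      ⟨fun hj => ((hj i).mp ((hi i).mpr rfl)).symm, fun hji k => hji ▸ hi k⟩
    simp [h, honly]
  · rw [if_neg h, eq_comm]
    exact sum_eq_zero fun i _ => if_neg fun hi => h (nOcc_eq_one_iff.mpr ⟨i, hi⟩)

/-- For `i = j` (and `u ≠ v`) the cell at `i` is empty, so a sum over all pairs of positions only
sees the pairs `i ≠ j`. -/
def pairCell (u v : ℕ) (i j k : Fin n) : Set ℕ := {a | (a = u ↔ k = i) ∧ (a = v ↔ k = j)}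

theorem ite_nOcc_eq_one_and (x : Fin n → ℕ) (u v : ℕ) :
    (if nOcc x u = 1 ∧ nOcc x v = 1 then 1 else 0 : ℝ) =
      ∑ i, ∑ j, ∏ k, (pairCell u v i j k).indicator 1 (x k) := by
  rw [← mul_one (1 : ℝ), ← ite_zero_mul_ite_zero, ite_nOcc_eq_one, ite_nOcc_eq_one, sum_mul_sum]
  refine sum_congr rfl fun i _ => sum_congr rfl fun j _ => ?_
  simp only [ite_zero_mul_ite_zero, Set.indicator_apply, pairCell, Set.mem_ofPred_eq,
    Pi.one_apply, Fintype.prod_boole, forall_and, mul_one]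

theorem hasSum_indicator_pairCell (hp : IsPMF p) {u v : ℕ} (huv : u ≠ v) (i j k : Fin n) :
    HasSum ((pairCell u v i j k).indicator p)
      (if k = i then (if k = j then 0 else p u) else if k = j then p v else 1 - p u - p v) := by
  have hu := hasSum_ite_eq u (p u)
  have hv := hasSum_ite_eq v (p v)
  by_cases hi : k = i <;> by_cases hj : k = j
  · subst hi hj
    rw [if_pos rfl, if_pos rfl]
    convert hasSum_zero using 1
    ext a
    simp only [pairCell, iff_true, Set.indicator_apply_eq_zero, Set.mem_ofPred_eq, and_imp]
    rintro rfl rfl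
    exact absurd rfl huv
  · subst hi
    rw [if_pos rfl, if_neg hj]
    convert hu using 1
    ext a
    by_cases hau : a = u <;> simp [pairCell, hj, hau, huv]
  · subst hj
    rw [if_neg hi, if_pos rfl]
    convert hv using 1
    ext a
    by_cases hav : a = v <;> simp [pairCell, hi, hav, huv.symm]
  · rw [if_neg hi, if_neg hj]
    refine ((hp.2.sub hu).sub hv).congr_fun fun a => ?_
    by_cases hau : a = u <;> by_cases hav : a = v <;> simp_all [pairCell]

theorem prod_pairCell_mass {i j : Fin n} (A B q : ℝ) :
    (∏ k, if k = i then (if k = j then 0 else A) else if k = j then B else q) =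
      if i = j then 0 else A * B * q ^ (n - 2) := by
  split_ifs with hij
  · exact prod_eq_zero (mem_univ i) (by simp [hij])
  have hrest : ∀ k ∈ ({i, j} : Finset (Fin n))ᶜ,
      (if k = i then (if k = j then 0 else A) else if k = j then B else q) = q := fun k hk => by
    simp only [mem_compl, mem_insert, mem_singleton, not_or] at hk
    simp [hk.1, hk.2]
  rw [← prod_mul_prod_compl {i, j}, prod_pair hij, prod_congr rfl hrest, prod_const,
    card_compl, card_pair hij, Fintype.card_fin]
  simp [hij, Ne.symm hij]

theorem sum_sum_ite_eq_zero_else (c : ℝ) :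
    (∑ i : Fin n, ∑ j : Fin n, if i = j then 0 else c) = n * (n - 1) * c := by
  have hrow : ∀ i : Fin n, (∑ j : Fin n, if i = j then 0 else c) = n * c - c := fun i =>
    calc (∑ j : Fin n, if i = j then 0 else c) = ∑ j : Fin n, (c - if i = j then c else 0) :=
          sum_congr rfl fun j _ => by split_ifs <;> simp
      _ = n * c - c := by simp [sum_sub_distrib]
  simp only [hrow, sum_const, card_univ, Fintype.card_fin, nsmul_eq_mul]
  ring

theorem hasSum_sampleProb_mul_ite_nOcc_eq_one_and (hp : IsPMF p) {u v : ℕ} (huv : u ≠ v) :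
    HasSum (fun x : Fin n → ℕ => sampleProb p x * if nOcc x u = 1 ∧ nOcc x v = 1 then 1 else 0)
      (n * (n - 1) * (p u * p v * (1 - p u - p v) ^ (n - 2))) := by
  simp_rw [ite_nOcc_eq_one_and, mul_sum]
  rw [← sum_sum_ite_eq_zero_else]
  refine hasSum_sum fun i _ => hasSum_sum fun j _ => ?_
  rw [← prod_pairCell_mass]
  exact hasSum_sampleProb_mul_prod_indicator hp.1 fun k => hasSum_indicator_pairCell hp huv i j k

theorem phi_le (i : ℕ) (x : Fin n → ℕ) : phi i x ≤ n :=
  (card_filter_le _ _).trans <| card_image_le.trans_eq <| by simp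

theorem phi_mul_phi_sub_one_le (i : ℕ) (x : Fin n → ℕ) : (phi i x : ℝ) * (phi i x - 1) ≤ n * n := by
  have hphi : (phi i x : ℝ) ≤ n := mod_cast phi_le i x
  nlinarith [(phi i x).cast_nonneg (α := ℝ)]

theorem mem_phi_one_finset {x : Fin n → ℕ} {u : ℕ} :
    u ∈ (univ.image x).filter (fun u => nOcc x u = 1) ↔ nOcc x u = 1 := by
  refine ⟨fun h => (mem_filter.mp h).2, fun h => mem_filter.mpr ⟨?_, h⟩⟩
  obtain ⟨i, hi⟩ := nOcc_eq_one_iff.mp h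
  exact mem_image.mpr ⟨i, mem_univ i, (hi i).mpr rfl⟩

theorem hasSum_ite_nOcc_eq_one_pair (x : Fin n → ℕ) :
    HasSum (fun uv : ℕ × ℕ => if uv.1 ≠ uv.2 ∧ nOcc x uv.1 = 1 ∧ nOcc x uv.2 = 1 then 1 else 0)
      ((phi 1 x : ℝ) * (phi 1 x - 1)) := by
  set S := (univ.image x).filter fun u => nOcc x u = 1
  have hS : ∀ uv : ℕ × ℕ, uv ∈ S.offDiag ↔ uv.1 ≠ uv.2 ∧ nOcc x uv.1 = 1 ∧ nOcc x uv.2 = 1 :=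
    fun uv => by rw [mem_offDiag, mem_phi_one_finset, mem_phi_one_finset]; tauto
  simp_rw [← hS]
  convert hasSum_sum_of_ne_finset_zero (L := .unconditional _) fun uv (huv : uv ∉ S.offDiag) =>
    if_neg huv using 1
  rw [sum_congr rfl fun uv huv => if_pos huv, sum_const, nsmul_one, offDiag_card,
    Nat.cast_sub (Nat.le_mul_self _), Nat.cast_mul, ← mul_sub_one]
  rfl

theorem hasSum_of_hasSum_fiberwise_of_nonneg {β γ : Type*} {f : β × γ → ℝ} (hf : 0 ≤ f)
    {g : β → ℝ} {h : γ → ℝ} {a : ℝ} (hg : ∀ b, HasSum (fun c => f (b, c)) (g b))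
    (hh : ∀ c, HasSum (fun b => f (b, c)) (h c)) (ha : HasSum g a) : HasSum h a := by
  have hfs : Summable f := (summable_prod_of_nonneg hf).mpr
    ⟨fun b => (hg b).summable, ha.summable.congr fun b => (hg b).tsum_eq.symm⟩
  have hfa : HasSum f a := (hfs.hasSum.prod_fiberwise hg).unique ha ▸ hfs.hasSum
  exact ((Equiv.prodComm γ β).hasSum_iff.mpr hfa).prod_fiberwise hh

end

theorem expected_phi_one_factorial_moment_general
    (p : ℕ → ℝ) (hp : IsPMF p) (n : ℕ) :
    expct n p (fun x => (phi 1 x : ℝ) * ((phi 1 x : ℝ) - 1)) =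
      (n : ℝ) * ((n : ℝ) - 1) *
        ∑' u : ℕ, ∑' v : ℕ,
          if u ≠ v then p u * p v * (1 - p u - p v) ^ (n - 2) else 0 := by
  set Φ : (Fin n → ℕ) → ℝ := fun x => (phi 1 x : ℝ) * ((phi 1 x : ℝ) - 1)
  set c : ℕ × ℕ → ℝ := fun uv =>
    n * (n - 1) * if uv.1 ≠ uv.2 then p uv.1 * p uv.2 * (1 - p uv.1 - p uv.2) ^ (n - 2) else 0
  set F : (Fin n → ℕ) × (ℕ × ℕ) → ℝ := fun q =>
    sampleProb p q.1 * if q.2.1 ≠ q.2.2 ∧ nOcc q.1 q.2.1 = 1 ∧ nOcc q.1 q.2.2 = 1 then 1 else 0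
  have hF : 0 ≤ F := fun q => mul_nonneg (sampleProb_nonneg hp.1 _) (by split_ifs <;> norm_num)
  have hsamples : ∀ x, HasSum (fun uv => F (x, uv)) (sampleProb p x * Φ x) :=
    fun x => (hasSum_ite_nOcc_eq_one_pair x).mul_left _
  have hpairs : ∀ uv, HasSum (fun x => F (x, uv)) (c uv) := by
    rintro ⟨u, v⟩
    by_cases huv : u = v
    · simp [F, c, huv]
    · simpa [F, c, huv] using hasSum_sampleProb_mul_ite_nOcc_eq_one_and hp huv
  have hexpct : HasSum (fun x => sampleProb p x * Φ x) (expct n p Φ) :=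
    hasSum_expct hp (fun x => (hasSum_ite_nOcc_eq_one_pair x).nonneg fun _ => by
      split_ifs <;> norm_num) (phi_mul_phi_sub_one_le 1)
  have hc : HasSum c (expct n p Φ) := hasSum_of_hasSum_fiberwise_of_nonneg hF hsamples hpairs hexpct
  have hc_nonneg : 0 ≤ c := fun uv => (hpairs uv).nonneg fun x => hF _
  rw [← hc.tsum_eq, hc.summable.tsum_prod' ((summable_prod_of_nonneg hc_nonneg).mp hc.summable).1,
    ← tsum_mul_left]
  exact tsum_congr fun u => tsum_mul_left

/-- **Second factorial moment of `Φ₁`** (equation (14)).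
For every pmf `p` on `ℕ` and every `n ≥ 2`,
`E[Φ₁(X^n)(Φ₁(X^n) - 1)] = n(n-1) ∑_{u ≠ v} p(u)p(v)(1-p(u)-p(v))^{n-2}`,
the sum running over ordered pairs of distinct symbols. -/
theorem expected_phi_one_factorial_moment
    (p : ℕ → ℝ) (hp : IsPMF p) (n : ℕ) (hn : 2 ≤ n) :
    expct n p (fun x => (phi 1 x : ℝ) * ((phi 1 x : ℝ) - 1)) =
      (n : ℝ) * ((n : ℝ) - 1) *
        ∑' u : ℕ, ∑' v : ℕ,
          if u ≠ v then p u * p v * (1 - p u - p v) ^ (n - 2) else 0 :=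
  expected_phi_one_factorial_moment_general p hp n
end
end

section
/- For every probability mass function p on ℕ and every integer n ≥ 2, the sum over ordered pairs of distinct symbols ∑_{u,v∈ℕ, u≠v} p(u)p(v)(1−p(u)−p(v))^{n−2}·(p(u)+p(v))² is at most 6/(n(n−1)). -/
open scoped BigOperators

/-!
Since `p u + p v ≤ 1`, the binomial expansion of `1 = (q + (1 - q)) ^ n` at `q = p u + p v`
bounds its `k = 2` term: `q ^ 2 (1 - q) ^ (n - 2) ≤ 1 / (n choose 2)`. Each summand is therefore
at most `p u p v · 2 / (n (n - 1))`, and summing over all pairs gives the bound `2 / (n (n - 1))`,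
even stronger than `6 / (n (n - 1))`.
-/

open Finset in
lemma choose_mul_pow_mul_one_sub_pow_le_one {q : ℝ} (hq0 : 0 ≤ q) (hq1 : q ≤ 1)
    {n k : ℕ} (hk : k ≤ n) :
    q ^ k * (1 - q) ^ (n - k) * (n.choose k : ℝ) ≤ 1 :=
  calc q ^ k * (1 - q) ^ (n - k) * (n.choose k : ℝ)
      ≤ ∑ j ∈ range (n + 1), q ^ j * (1 - q) ^ (n - j) * (n.choose j : ℝ) :=
        single_le_sum (f := fun j => q ^ j * (1 - q) ^ (n - j) * (n.choose j : ℝ))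
          (fun j _ => by have := sub_nonneg.2 hq1; positivity)
          (mem_range.mpr (Nat.lt_succ_of_le hk))
    _ = 1 := by rw [← add_pow]; simp

lemma sq_mul_one_sub_pow_le {q : ℝ} (hq0 : 0 ≤ q) (hq1 : q ≤ 1) {n : ℕ} (hn : 2 ≤ n) :
    q ^ 2 * (1 - q) ^ (n - 2) ≤ 2 / ((n : ℝ) * ((n : ℝ) - 1)) := by
  have hn' : (2 : ℝ) ≤ n := by exact_mod_cast hn
  have hbinom := choose_mul_pow_mul_one_sub_pow_le_one hq0 hq1 hn
  rw [Nat.cast_choose_two] at hbinom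
  rw [le_div_iff₀ (by nlinarith)]
  linarith

lemma mul_mul_one_sub_sub_pow_mul_sq_le {a b : ℝ} (ha : 0 ≤ a) (hb : 0 ≤ b) (hab : a + b ≤ 1)
    {n : ℕ} (hn : 2 ≤ n) :
    a * b * (1 - a - b) ^ (n - 2) * (a + b) ^ 2 ≤ a * b * (2 / ((n : ℝ) * ((n : ℝ) - 1))) := by
  rw [mul_assoc (a * b), show 1 - a - b = 1 - (a + b) by ring, mul_comm (_ ^ (n - 2))]
  exact mul_le_mul_of_nonneg_left (sq_mul_one_sub_pow_le (by positivity) hab hn) (by positivity)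

lemma tsum_tsum_le_of_le_mul {α β : Type*} {f : α → β → ℝ} {p : α → ℝ} {q : β → ℝ} {a b : ℝ}
    (hp : HasSum p a) (hq : HasSum q b) (hf0 : ∀ u v, 0 ≤ f u v)
    (hf : ∀ u v, f u v ≤ p u * q v) :
    ∑' u, ∑' v, f u v ≤ a * b := by
  have hrow : ∀ u, ∑' v, f u v ≤ p u * b := fun u =>
    (hq.mul_left (p u)).tsum_eq ▸
      Summable.tsum_le_tsum (hf u) (.of_nonneg_of_le (hf0 u) (hf u) (hq.mul_left (p u)).summable)
        (hq.mul_left (p u)).summable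
  have hrow0 : ∀ u, 0 ≤ ∑' v, f u v := fun u => tsum_nonneg (hf0 u)
  calc ∑' u, ∑' v, f u v ≤ ∑' u, p u * b :=
        Summable.tsum_le_tsum hrow (.of_nonneg_of_le hrow0 hrow (hp.mul_right b).summable)
          (hp.mul_right b).summable
    _ = a * b := (hp.mul_right b).tsum_eq

/-- **Bound (8) of the paper.**
For every probability mass function `p` on `ℕ` and every integer `n ≥ 2`,
the sum over ordered pairs of distinct symbols
`∑_{u ≠ v} p(u)p(v)(1-p(u)-p(v))^{n-2} (p(u)+p(v))² ≤ 6/(n(n-1))`. -/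
theorem bivariate_weighted_sum_bound
    (p : ℕ → ℝ) (hp_nonneg : ∀ u, 0 ≤ p u) (hp_sum : HasSum p 1)
    (n : ℕ) (hn : 2 ≤ n) :
    (∑' u : ℕ, ∑' v : ℕ,
        if u ≠ v then
          p u * p v * (1 - p u - p v) ^ (n - 2) * (p u + p v) ^ 2
        else 0) ≤
      6 / ((n : ℝ) * ((n : ℝ) - 1)) := by
  set c : ℝ := 2 / ((n : ℝ) * ((n : ℝ) - 1)) with hc
  have hden : 0 < (n : ℝ) * ((n : ℝ) - 1) := by
    have : (2 : ℝ) ≤ n := by exact_mod_cast hn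
    nlinarith
  have hpair : ∀ u v, u ≠ v → p u + p v ≤ 1 := fun u v huv => by
    simpa [Finset.sum_pair huv] using sum_le_hasSum {u, v} (fun i _ => hp_nonneg i) hp_sum
  refine le_trans (tsum_tsum_le_of_le_mul hp_sum (hp_sum.mul_right c) ?nonneg ?le) ?_
  case nonneg =>
    intro u v
    have := hp_nonneg u; have := hp_nonneg v
    split_ifs with huv
    · have : 0 ≤ 1 - p u - p v := by linarith [hpair u v huv]
      positivity
    · rfl
  case le =>
    intro u v
    have := hp_nonneg u; have := hp_nonneg v
    split_ifs with huv
    · rw [← mul_assoc]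
      exact mul_mul_one_sub_sub_pow_mul_sq_le (hp_nonneg u) (hp_nonneg v) (hpair u v huv) hn
    · positivity
  rw [one_mul, one_mul, hc]
  gcongr
  norm_num
end
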